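/- Let n ≥ 3, 1 ≤ τ ≤ n − 2, e = n(n−1)/2, and let v = (V^{(1)},…,V^{(τ)}) ∈ ℂ^{nτ} be such that the nτ complex numbers {V_i^{(k)}} are algebraically independent over ℚ. Then the stacked voltage coefficient matrix A(v) ∈ ℂ^{nτ×e} has rank nτ − τ(τ+1)/2 < e over ℂ; equivalently, the ℂ-linear map y ↦ A(v)y on ℂ^e has a nontrivial kernel, so no right-hand side i ∈ ℂ^{nτ} determines y uniquely from i = A(v)y. Hence τ = n − 1 is the minimum number of measurements for which a generic stack of complex measurements uniquely determines y. -/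

import Mathlib

/-!
The kernel of `(Astack v)ᵀ` is the space of infinitesimal motions of the complete framework
in `F^τ` whose node `i` sits at `pᵢ = (v k i)ₖ`: velocities `u` with
`(uₐ - u_b) ⬝ (pₐ - p_b) = 0` for all nodes `a, b`. If some `τ + 1` nodes are affinely
independent, which algebraic independence of the coordinates guarantees because the relevant
determinant is a nonzero polynomial, every such motion is trivial, `uᵢ = t + S (pᵢ - p₀)` with
`S` skew, so this kernel has dimension `τ + τ(τ-1)/2 = (τ+1).choose 2`. Hence `A(v)` has rank
`nτ - (τ+1).choose 2` and nullity `(n-τ).choose 2`, which is positive for `τ ≤ n - 2` and zero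
for `τ = n - 1`.
-/

open Matrix BigOperators

/-- Edges of the complete graph on `Fin n`: ordered pairs `(i, j)` with `i < j`. -/
abbrev CEdge (n : ℕ) := {p : Fin n × Fin n // p.1 < p.2}

/-- Incidence matrix of the complete graph on `Fin n`, each edge `(i, j)` (with `i < j`)
oriented from `i` to `j`:  `H i l = 1` if edge `l` leaves node `i`, `-1` if it enters `i`,
and `0` otherwise. -/
def incid (F : Type*) [Field F] (n : ℕ) : Matrix (Fin n) (CEdge n) F :=
  Matrix.of fun i l => if i = l.val.1 then 1 else if i = l.val.2 then -1 else 0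

/-- Voltage coefficient matrix `Ã(V) = H ⬝ diag(Hᵀ V)`. -/
def Atilde {F : Type*} [Field F] {n : ℕ} (V : Fin n → F) : Matrix (Fin n) (CEdge n) F :=
  incid F n * Matrix.diagonal ((incid F n)ᵀ *ᵥ V)

/-- Stacked voltage coefficient matrix `A(v)` for `τ` measurements `v 1, …, v τ`:
the row indexed by `(k, i)` is the `i`-th row of `Ã(V^(k))`. -/
def Astack {F : Type*} [Field F] {n τ : ℕ} (v : Fin τ → Fin n → F) :
    Matrix (Fin τ × Fin n) (CEdge n) F :=
  Matrix.of fun p l => Atilde (v p.1) p.2 l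

/-- Rigidity matrix of the complete graph at the configuration `x = (x 1, …, x n)`,
`x i ∈ F^τ`: the row indexed by edge `(i, j)`, `i < j`, has the entries of `(x i − x j)ᵀ`
in the `τ` columns of node `i`, the entries of `(x j − x i)ᵀ` in the `τ` columns of node `j`,
and zeros elsewhere. -/
def rigidityM {F : Type*} [Field F] {n τ : ℕ} (x : Fin n → Fin τ → F) :
    Matrix (CEdge n) (Fin n × Fin τ) F :=
  Matrix.of fun l p =>
    if p.1 = l.val.1 then x l.val.1 p.2 - x l.val.2 p.2
    else if p.1 = l.val.2 then x l.val.2 p.2 - x l.val.1 p.2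
    else 0

lemma Nat.choose_two_add_choose_two (d m : ℕ) :
    (d + 1).choose 2 + (d + m).choose 2 = d * (d + m) + m.choose 2 := by
  have h : ((d + 1).choose 2 + (d + m).choose 2 : ℚ) = d * (d + m) + m.choose 2 := by
    simp only [Nat.cast_choose_two, Nat.cast_add, Nat.cast_one]
    ring
  exact_mod_cast h

lemma Matrix.rank_add_finrank_ker {m n K : Type*} [Fintype n] [Field K] (A : Matrix m n K) :
    A.rank + Module.finrank K (LinearMap.ker A.mulVecLin) = Fintype.card n := by
  rw [Matrix.rank, LinearMap.finrank_range_add_finrank_ker, Module.finrank_fintype_fun_eq_card]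

def cedgeEquivSigma (m : ℕ) : CEdge m ≃ Σ j : Fin m, Fin j where
  toFun l := ⟨l.1.2, ⟨l.1.1, l.2⟩⟩
  invFun x := ⟨(⟨x.2, x.2.isLt.trans x.1.isLt⟩, x.1), x.2.isLt⟩
  left_inv _ := rfl
  right_inv _ := rfl

lemma card_cedge (m : ℕ) : Fintype.card (CEdge m) = m.choose 2 := by
  rw [Fintype.card_congr (cedgeEquivSigma m), Fintype.card_sigma, Nat.choose_two_right,
    ← Finset.sum_range_id]
  simp [Fin.sum_univ_eq_sum_range (fun i => i)]

section Incidence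

variable {F : Type*} [Field F] {n : ℕ}

lemma incid_apply_eq_single (i : Fin n) (l : CEdge n) :
    incid F n i l = (Pi.single l.1.1 1 - Pi.single l.1.2 1 : Fin n → F) i := by
  have hne : l.1.1 ≠ l.1.2 := l.2.ne
  by_cases h1 : i = l.1.1
  · subst h1; simp [incid, hne]
  · by_cases h2 : i = l.1.2
    · subst h2; simp [incid, h1]
    · simp [incid, h1, h2]

lemma incid_transpose_mulVec (V : Fin n → F) (l : CEdge n) :
    ((incid F n)ᵀ *ᵥ V) l = V l.1.1 - V l.1.2 := by
  change (fun i => incid F n i l) ⬝ᵥ V = _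
  simp only [incid_apply_eq_single, sub_dotProduct, single_one_dotProduct]

end Incidence

section Framework

variable {d : ℕ} {ι : Type*}

-- `v k i` is the `k`-th coordinate of node `i`, the layout of the argument of `Astack`.
def displacement {R : Type*} [Sub R] (v : Fin d → ι → R) (o i : ι) : Fin d → R :=
  fun k => v k i - v k o

def frameMatrix {R : Type*} [Sub R] (v : Fin d → ι → R) (o : ι) (e : Fin d → ι) :
    Matrix (Fin d) (Fin d) R :=
  Matrix.of fun k j => displacement v o (e j) k

variable {F : Type*} [Field F]

lemma displacement_self (v : Fin d → ι → F) (o : ι) : displacement v o o = 0 := by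
  ext k; simp [displacement]

lemma displacement_sub_displacement (v : Fin d → ι → F) (o a b : ι) :
    displacement v o a - displacement v o b = displacement v b a := by
  ext k; simp [displacement]

lemma displacement_swap (v : Fin d → ι → F) (a b : ι) :
    displacement v a b = -displacement v b a := by
  ext k; simp [displacement]

lemma frameMatrix_transpose_mulVec (v : Fin d → ι → F) (o : ι) (e : Fin d → ι)
    (y : Fin d → F) (j : Fin d) :
    ((frameMatrix v o e)ᵀ *ᵥ y) j = displacement v o (e j) ⬝ᵥ y := rfl

lemma frameMatrix_transpose_mul_frameMatrix (v w : Fin d → ι → F) (o : ι) (e : Fin d → ι)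
    (j j' : Fin d) :
    ((frameMatrix v o e)ᵀ * frameMatrix w o e) j j' =
      displacement v o (e j) ⬝ᵥ displacement w o (e j') := rfl

def skewOf : (CEdge d → F) →ₗ[F] Matrix (Fin d) (Fin d) F where
  toFun a := Matrix.of fun i j =>
    if h : i < j then a ⟨(i, j), h⟩ else if h' : j < i then -a ⟨(j, i), h'⟩ else 0
  map_add' a b := by
    ext i j
    simp only [of_apply, Matrix.add_apply, Pi.add_apply]
    split_ifs <;> ring
  map_smul' c a := by
    ext i j
    simp only [of_apply, Matrix.smul_apply, Pi.smul_apply, smul_eq_mul, RingHom.id_apply]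
    split_ifs <;> ring

lemma skewOf_apply_edge (a : CEdge d → F) (l : CEdge d) : skewOf a l.1.1 l.1.2 = a l := by
  simp [skewOf, l.2]

lemma skewOf_transpose (a : CEdge d → F) : (skewOf a)ᵀ = -skewOf a := by
  ext i j
  simp only [skewOf, LinearMap.coe_mk, AddHom.coe_mk, transpose_apply, of_apply]
  rcases lt_trichotomy i j with h | rfl | h
  · simp [h, h.not_gt]
  · simp
  · simp [h, h.not_gt]

lemma skewOf_entries_of_transpose_eq_neg [NeZero (2 : F)] {S : Matrix (Fin d) (Fin d) F}
    (hS : Sᵀ = -S) :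
    skewOf (fun l => S l.1.1 l.1.2) = S := by
  have hanti (i j : Fin d) : S j i = -S i j := by simpa using congrFun (congrFun hS i) j
  ext i j
  simp only [skewOf, LinearMap.coe_mk, AddHom.coe_mk, of_apply]
  rcases lt_trichotomy i j with h | rfl | h
  · simp [h]
  · have h2 : (2 : F) * S i i = 0 := by linear_combination hanti i i
    simpa using ((mul_eq_zero.mp h2).resolve_left two_ne_zero).symm
  · simp [h, h.not_gt, hanti j i]

lemma dotProduct_mulVec_self_of_transpose_eq_neg [NeZero (2 : F)]
    {S : Matrix (Fin d) (Fin d) F} (hS : Sᵀ = -S) (y : Fin d → F) : y ⬝ᵥ (S *ᵥ y) = 0 := by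
  have h : y ⬝ᵥ (S *ᵥ y) = -(y ⬝ᵥ (S *ᵥ y)) := by
    conv_lhs => rw [dotProduct_mulVec, ← mulVec_transpose, hS, dotProduct_comm]
    simp [neg_mulVec]
  have h2 : (2 : F) * (y ⬝ᵥ (S *ᵥ y)) = 0 := by linear_combination h
  exact (mul_eq_zero.mp h2).resolve_left two_ne_zero

def IsInfinitesimalMotion (v : Fin d → ι → F) (u : Fin d × ι → F) : Prop :=
  ∀ a b, displacement (Function.curry u) a b ⬝ᵥ displacement v a b = 0

lemma IsInfinitesimalMotion.polarization {v : Fin d → ι → F} {u : Fin d × ι → F}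
    (hu : IsInfinitesimalMotion v u) (o a b : ι) :
    displacement (Function.curry u) o a ⬝ᵥ displacement v o b +
      displacement (Function.curry u) o b ⬝ᵥ displacement v o a = 0 := by
  have hab := hu b a
  rw [← displacement_sub_displacement _ o, ← displacement_sub_displacement v o] at hab
  simp only [sub_dotProduct, dotProduct_sub] at hab
  linear_combination -hab + hu o a + hu o b

lemma isInfinitesimalMotion_iff_of_lt [LinearOrder ι]
    {v : Fin d → ι → F} {u : Fin d × ι → F} :
    IsInfinitesimalMotion v u ↔
      ∀ a b, a < b → displacement (Function.curry u) a b ⬝ᵥ displacement v a b = 0 := by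
  refine ⟨fun hu a b _ => hu a b, fun h a b => ?_⟩
  rcases lt_trichotomy a b with hab | rfl | hab
  · exact h a b hab
  · simp [displacement_self]
  · rw [displacement_swap v, displacement_swap (Function.curry u), neg_dotProduct_neg]
    exact h b a hab

def trivialMotion (v : Fin d → ι → F) (o : ι) :
    (Fin d → F) × (CEdge d → F) →ₗ[F] Fin d × ι → F where
  toFun x p := x.1 p.1 + (skewOf x.2 *ᵥ displacement v o p.2) p.1
  map_add' x y := by
    ext p; simp only [Prod.fst_add, Prod.snd_add, map_add, add_mulVec, Pi.add_apply]; ring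
  map_smul' c x := by
    ext p
    simp only [Prod.smul_fst, Prod.smul_snd, map_smul, smul_mulVec, Pi.smul_apply, smul_eq_mul,
      RingHom.id_apply]
    ring

lemma displacement_trivialMotion (v : Fin d → ι → F) (o : ι)
    (x : (Fin d → F) × (CEdge d → F)) (a b : ι) :
    displacement (Function.curry (trivialMotion v o x)) a b = skewOf x.2 *ᵥ displacement v a b := by
  rw [← displacement_sub_displacement v o, mulVec_sub]
  ext k
  simp [displacement, trivialMotion]

lemma isInfinitesimalMotion_trivialMotion [NeZero (2 : F)] (v : Fin d → ι → F) (o : ι)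
    (x : (Fin d → F) × (CEdge d → F)) : IsInfinitesimalMotion v (trivialMotion v o x) := by
  intro a b
  rw [displacement_trivialMotion, dotProduct_comm]
  exact dotProduct_mulVec_self_of_transpose_eq_neg (skewOf_transpose x.2) _

lemma trivialMotion_injective {v : Fin d → ι → F} {o : ι} {e : Fin d → ι}
    (hQ : IsUnit (frameMatrix v o e)) : Function.Injective (trivialMotion v o) := by
  rw [← LinearMap.ker_eq_bot, Submodule.eq_bot_iff]
  rintro ⟨t, a⟩ h
  rw [LinearMap.mem_ker] at h
  have ht : t = 0 := by
    ext k; simpa [trivialMotion, displacement_self] using congrFun h (k, o)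
  have hSQ : skewOf a * frameMatrix v o e = 0 * frameMatrix v o e := by
    ext k j
    simpa [trivialMotion, ht, mul_apply, mulVec, dotProduct, frameMatrix]
      using congrFun h (k, e j)
  have hS : skewOf a = 0 := hQ.mul_left_inj.mp hSQ
  have ha : a = 0 := by
    ext l; rw [← skewOf_apply_edge a l, hS]; rfl
  simp [ht, ha]

lemma IsInfinitesimalMotion.mem_range_trivialMotion [NeZero (2 : F)] {v : Fin d → ι → F}
    {u : Fin d × ι → F} (hu : IsInfinitesimalMotion v u) {o : ι} {e : Fin d → ι}
    (hQ : IsUnit (frameMatrix v o e)) : u ∈ LinearMap.range (trivialMotion v o) := by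
  set U := Function.curry u
  set Q := frameMatrix v o e
  set M := frameMatrix U o e
  have hQt : IsUnit Qᵀ := (isUnit_transpose Q).mpr hQ
  have hG : Mᵀ * Q + Qᵀ * M = 0 := by
    ext j j'
    rw [Matrix.add_apply, frameMatrix_transpose_mul_frameMatrix,
      frameMatrix_transpose_mul_frameMatrix, dotProduct_comm (displacement v o _)]
    exact hu.polarization o (e j) (e j')
  -- `S` carries the displacements of the frame nodes to their relative velocities
  set S := M * Q⁻¹
  have hSQ : S * Q = M := nonsing_inv_mul_cancel_right Q M ((isUnit_iff_isUnit_det Q).mp hQ)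
  have hskew : Sᵀ = -S := by
    have h : Qᵀ * (Sᵀ + S) * Q = Qᵀ * 0 * Q := by
      calc Qᵀ * (Sᵀ + S) * Q = (S * Q)ᵀ * Q + Qᵀ * (S * Q) := by
            simp only [mul_add, add_mul, transpose_mul, Matrix.mul_assoc]
        _ = Qᵀ * 0 * Q := by rw [hSQ, hG, Matrix.mul_zero, Matrix.zero_mul]
    exact eq_neg_of_add_eq_zero_left (hQt.mul_right_inj.mp (hQ.mul_left_inj.mp h))
  have hQtS : Qᵀ * S = -Mᵀ := by
    rw [← hSQ, transpose_mul, hskew, Matrix.mul_neg, neg_neg]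
  have hS : ∀ i, S *ᵥ displacement v o i = displacement U o i := by
    intro i
    apply mulVec_injective_iff_isUnit.mpr hQt
    change Qᵀ *ᵥ (S *ᵥ _) = Qᵀ *ᵥ _
    rw [mulVec_mulVec, hQtS, neg_mulVec]
    ext j
    simp only [Pi.neg_apply, Q, M, frameMatrix_transpose_mulVec]
    rw [neg_eq_iff_add_eq_zero, dotProduct_comm (displacement v o _)]
    exact hu.polarization o (e j) i
  refine ⟨(fun k => u (k, o), fun l => S l.1.1 l.1.2), ?_⟩
  ext ⟨k, i⟩
  simp [trivialMotion, skewOf_entries_of_transpose_eq_neg hskew, hS, U, displacement]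

lemma isUnit_frameMatrix_of_algebraicIndependent {R : Type*} [CommRing R] [Nontrivial R]
    [Algebra R F] {v : Fin d → ι → F}
    (hv : AlgebraicIndependent R (fun p : Fin d × ι => v p.1 p.2)) {o : ι} {e : Fin d → ι}
    (he : Function.Injective e) (ho : ∀ j, e j ≠ o) : IsUnit (frameMatrix v o e) := by
  classical
  let P := frameMatrix (fun k i => (MvPolynomial.X (k, i) : MvPolynomial (Fin d × ι) R)) o e
  let δ : Fin d × ι → R := fun p => if e p.1 = p.2 then 1 else 0
  have hP : (MvPolynomial.aeval fun p : Fin d × ι => v p.1 p.2).mapMatrix P =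
      frameMatrix v o e := by
    ext k j; simp [P, frameMatrix, displacement]
  -- placing the frame nodes at the standard basis vectors turns `P` into the identity
  have hP_one : (MvPolynomial.aeval δ).mapMatrix P = 1 := by
    ext k j; simp [P, δ, frameMatrix, displacement, one_apply, he.eq_iff, eq_comm, (ho k).symm]
  have hdet : P.det ≠ 0 := fun h => by
    simpa [h, hP_one] using AlgHom.map_det (MvPolynomial.aeval δ) P
  rw [isUnit_iff_isUnit_det, isUnit_iff_ne_zero, ← hP, ← AlgHom.map_det]
  exact fun h => hdet (hv.eq_zero_of_aeval_eq_zero _ h)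

end Framework

section Astack

variable {F : Type*} [Field F] {n d : ℕ}

lemma astack_apply (v : Fin d → Fin n → F) (p : Fin d × Fin n) (l : CEdge n) :
    Astack v p l = incid F n p.2 l * (v p.1 l.1.1 - v p.1 l.1.2) := by
  simp [Astack, Atilde, mul_diagonal, incid_transpose_mulVec]

lemma astack_transpose_mulVec (v : Fin d → Fin n → F) (u : Fin d × Fin n → F) (l : CEdge n) :
    ((Astack v)ᵀ *ᵥ u) l =
      displacement (Function.curry u) l.1.1 l.1.2 ⬝ᵥ displacement v l.1.1 l.1.2 := by
  have hcol (k : Fin d) : ∑ i, incid F n i l * u (k, i) = u (k, l.1.1) - u (k, l.1.2) := by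
    simp only [incid_apply_eq_single]
    exact (sub_dotProduct _ _ _).trans (by simp)
  simp only [mulVec, dotProduct, transpose_apply, astack_apply, Fintype.sum_prod_type]
  refine Finset.sum_congr rfl fun k _ => ?_
  have hk : ∑ i, incid F n i l * (v k l.1.1 - v k l.1.2) * u (k, i) =
      (v k l.1.1 - v k l.1.2) * ∑ i, incid F n i l * u (k, i) := by
    rw [Finset.mul_sum]; exact Finset.sum_congr rfl fun i _ => by ring
  rw [hk, hcol]
  simp only [displacement, Function.curry_apply]
  ring

lemma mem_ker_astack_transpose_iff (v : Fin d → Fin n → F) (u : Fin d × Fin n → F) :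
    u ∈ LinearMap.ker (Astack v)ᵀ.mulVecLin ↔ IsInfinitesimalMotion v u := by
  rw [isInfinitesimalMotion_iff_of_lt, LinearMap.mem_ker, mulVecLin_apply, funext_iff]
  refine ⟨fun h a b hab => ?_, fun h l => ?_⟩
  · simpa [astack_transpose_mulVec] using h ⟨(a, b), hab⟩
  · simpa [astack_transpose_mulVec] using h l.1.1 l.1.2 l.2

lemma ker_astack_transpose_eq_range_trivialMotion [NeZero (2 : F)] {v : Fin d → Fin n → F}
    {o : Fin n} {e : Fin d → Fin n} (hQ : IsUnit (frameMatrix v o e)) :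
    LinearMap.ker (Astack v)ᵀ.mulVecLin = LinearMap.range (trivialMotion v o) := by
  refine le_antisymm (fun u hu => ?_) ?_
  · exact ((mem_ker_astack_transpose_iff v u).mp hu).mem_range_trivialMotion hQ
  · rintro _ ⟨x, rfl⟩
    exact (mem_ker_astack_transpose_iff v _).mpr (isInfinitesimalMotion_trivialMotion v o x)

lemma rank_astack_add_choose [NeZero (2 : F)] {v : Fin d → Fin n → F} {o : Fin n}
    {e : Fin d → Fin n} (hQ : IsUnit (frameMatrix v o e)) :
    (Astack v).rank + (d + 1).choose 2 = d * n := by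
  have h := LinearMap.finrank_range_add_finrank_ker (Astack v)ᵀ.mulVecLin
  rw [ker_astack_transpose_eq_range_trivialMotion hQ,
    LinearMap.finrank_range_of_inj (trivialMotion_injective hQ)] at h
  rw [← rank_transpose, Matrix.rank, Nat.choose_succ_succ', Nat.choose_one_right, ← card_cedge]
  simpa [Module.finrank_prod] using h

end Astack

section Generic

variable {R F : Type*} [CommRing R] [Nontrivial R] [Field F] [NeZero (2 : F)] [Algebra R F]
  {n d : ℕ} {v : Fin d → Fin n → F}

lemma rank_astack_add_choose_of_algebraicIndependent (hd : d < n)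
    (hv : AlgebraicIndependent R fun p : Fin d × Fin n => v p.1 p.2) :
    (Astack v).rank + (d + 1).choose 2 = d * n :=
  rank_astack_add_choose (o := ⟨0, by omega⟩) (e := fun j => ⟨j + 1, by omega⟩) <|
    isUnit_frameMatrix_of_algebraicIndependent hv (fun i j h => Fin.ext (by simpa using h))
      (fun j h => by simp [Fin.ext_iff] at h)

lemma finrank_ker_astack_of_algebraicIndependent (hd : d < n)
    (hv : AlgebraicIndependent R fun p : Fin d × Fin n => v p.1 p.2) :
    Module.finrank F (LinearMap.ker (Astack v).mulVecLin) = (n - d).choose 2 := by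
  have hrank := rank_astack_add_choose_of_algebraicIndependent hd hv
  have hker := (Astack v).rank_add_finrank_ker
  rw [card_cedge] at hker
  obtain ⟨m, rfl⟩ : ∃ m, n = d + m := ⟨n - d, by omega⟩
  have := Nat.choose_two_add_choose_two d m
  rw [Nat.add_sub_cancel_left]
  omega

lemma exists_ne_zero_astack_mulVec_eq_zero (hd : d + 2 ≤ n)
    (hv : AlgebraicIndependent R fun p : Fin d × Fin n => v p.1 p.2) :
    ∃ y ≠ 0, Astack v *ᵥ y = 0 := by
  have hpos : 0 < Module.finrank F (LinearMap.ker (Astack v).mulVecLin) := by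
    rw [finrank_ker_astack_of_algebraicIndependent (by omega) hv]
    exact Nat.choose_pos (by omega)
  obtain ⟨y, hy, hy0⟩ :=
    Submodule.exists_mem_ne_zero_of_ne_bot (Submodule.one_le_finrank_iff.mp hpos)
  exact ⟨y, hy0, hy⟩

lemma astack_mulVec_injective (hd : d + 1 = n)
    (hv : AlgebraicIndependent R fun p : Fin d × Fin n => v p.1 p.2) :
    Function.Injective (Astack v *ᵥ ·) := by
  have h := finrank_ker_astack_of_algebraicIndependent (by omega) hv
  rw [show n - d = 1 by omega, Nat.choose_eq_zero_of_lt (by norm_num),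
    Submodule.finrank_eq_zero] at h
  exact LinearMap.ker_eq_bot.mp h

end Generic

lemma exists_algebraicIndependent_complex (ι : Type) [Countable ι] :
    ∃ f : ι → ℂ, AlgebraicIndependent ℚ f := by
  obtain ⟨κ, b, hb⟩ := exists_isTranscendenceBasis' ℚ ℂ
  have hκ : Cardinal.mk κ = Cardinal.continuum := by
    simpa [Cardinal.mk_complex, eq_comm] using
      IsAlgClosed.cardinal_eq_cardinal_transcendence_basis_of_aleph0_lt b hb (by simp)
        (by rw [Cardinal.mk_complex]; exact Cardinal.aleph0_lt_continuum)
  obtain ⟨e⟩ : Nonempty (ι ↪ κ) := by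
    rw [← Cardinal.le_def, hκ]
    exact Cardinal.mk_le_aleph0.trans Cardinal.aleph0_le_continuum
  exact ⟨b ∘ e, hb.1.comp e e.injective⟩

theorem stmt10_general (n τ : ℕ) (hn : 3 ≤ n) (hτ2 : τ ≤ n - 2)
    (v : Fin τ → Fin n → ℂ)
    (hgen : AlgebraicIndependent ℚ (fun p : Fin τ × Fin n => v p.1 p.2)) :
    (Astack v).rank = n * τ - τ * (τ + 1) / 2 ∧
    n * τ - τ * (τ + 1) / 2 < n * (n - 1) / 2 ∧
    (∃ y : CEdge n → ℂ, y ≠ 0 ∧ Astack v *ᵥ y = 0) ∧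
    (∀ (i : Fin τ × Fin n → ℂ) (y : CEdge n → ℂ),
        i = Astack v *ᵥ y → ∃ y' : CEdge n → ℂ, y' ≠ y ∧ i = Astack v *ᵥ y') ∧
    IsLeast {τ' : ℕ |
        ∀ v' : Fin τ' → Fin n → ℂ,
          AlgebraicIndependent ℚ (fun p : Fin τ' × Fin n => v' p.1 p.2) →
          Function.Injective (fun y : CEdge n → ℂ => Astack v' *ᵥ y)}
      (n - 1) := by
  have hrank := rank_astack_add_choose_of_algebraicIndependent (by omega) hgen
  have hker := finrank_ker_astack_of_algebraicIndependent (by omega) hgen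
  have hnullity := (Astack v).rank_add_finrank_ker
  have hpos : 0 < (n - τ).choose 2 := Nat.choose_pos (by omega)
  rw [card_cedge, Nat.choose_two_right] at hnullity
  rw [Nat.choose_two_right, Nat.add_sub_cancel, Nat.mul_comm τ n, Nat.mul_comm (τ + 1)] at hrank
  obtain ⟨y₀, hy₀, hAy₀⟩ := exists_ne_zero_astack_mulVec_eq_zero (by omega) hgen
  refine ⟨by omega, by omega, ⟨y₀, hy₀, hAy₀⟩, fun i y hi => ⟨y + y₀, ?_, ?_⟩, ?_, ?_⟩
  · simpa using hy₀
  · rw [mulVec_add, hAy₀, add_zero, hi]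
  · exact fun v' hv' => astack_mulVec_injective (by omega) hv'
  · intro τ' hτ'
    by_contra! hlt
    obtain ⟨f, hf⟩ := exists_algebraicIndependent_complex (Fin τ' × Fin n)
    obtain ⟨y, hy, hAy⟩ :=
      exists_ne_zero_astack_mulVec_eq_zero (v := fun k i => f (k, i)) (by omega) hf
    exact hy (hτ' (fun k i => f (k, i)) hf (hAy.trans (mulVec_zero _).symm))

/-- with `1 ≤ τ ≤ n − 2` generic complex measurements, `A(v)` has rank
`nτ − τ(τ+1)/2 < e` over `ℂ`, so `y ↦ A(v)y` has a nontrivial kernel and no right-hand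
side determines `y` uniquely; hence `τ = n − 1` is the minimum number of measurements
for which a generic stack of complex measurements uniquely determines `y`. -/
theorem stmt10 (n τ : ℕ) (hn : 3 ≤ n) (hτ1 : 1 ≤ τ) (hτ2 : τ ≤ n - 2)
    (v : Fin τ → Fin n → ℂ)
    (hgen : AlgebraicIndependent ℚ (fun p : Fin τ × Fin n => v p.1 p.2)) :
    (Astack v).rank = n * τ - τ * (τ + 1) / 2 ∧
    n * τ - τ * (τ + 1) / 2 < n * (n - 1) / 2 ∧
    (∃ y : CEdge n → ℂ, y ≠ 0 ∧ Astack v *ᵥ y = 0) ∧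
    (∀ (i : Fin τ × Fin n → ℂ) (y : CEdge n → ℂ),
        i = Astack v *ᵥ y → ∃ y' : CEdge n → ℂ, y' ≠ y ∧ i = Astack v *ᵥ y') ∧
    IsLeast {τ' : ℕ |
        ∀ v' : Fin τ' → Fin n → ℂ,
          AlgebraicIndependent ℚ (fun p : Fin τ' × Fin n => v' p.1 p.2) →
          Function.Injective (fun y : CEdge n → ℂ => Astack v' *ᵥ y)}
      (n - 1) :=
  stmt10_general n τ hn hτ2 v hgen
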